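/- Let R be a noetherian F-finite normal integral domain of prime characteristic p and let 𝔭 ⊆ R be a prime ideal of height 1. Then R is purely F-regular along 𝔭 if and only if both of the following hold: (i) for every prime ideal q of R containing 𝔭, the localization R_q is purely F-regular along 𝔭R_q; and (ii) for every prime ideal q of R not containing 𝔭, the localization R_q is strongly F-regular. -/

import Mathlib

/-- `φ` is a `p^e`-linear map: an additive map with `φ (a^(p^e) * b) = a * φ b`. -/
def IsPLinearMap (p e : ℕ) {R : Type*} [CommRing R] (φ : R →+ R) : Prop :=
  ∀ a b : R, φ (a ^ p ^ e * b) = a * φ b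

/-- `R` is purely `F`-regular along the ideal `q`: for every `c ∉ q` there are `e ≥ 1` and a
`p^e`-linear map `φ` with `φ q ⊆ q` and `φ c = 1`. -/
def PurelyFRegularAlong (p : ℕ) {R : Type*} [CommRing R] (q : Ideal R) : Prop :=
  ∀ c : R, c ∉ q → ∃ e : ℕ, 1 ≤ e ∧ ∃ φ : R →+ R,
    IsPLinearMap p e φ ∧ (∀ x ∈ q, φ x ∈ q) ∧ φ c = 1

/-- `R` is F-finite: `R` is a finitely generated module over its subring of `p`-th powers,
i.e. there is a finite set spanning `R` with coefficients that are `p`-th powers. -/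
def FFinite (p : ℕ) (R : Type*) [CommRing R] : Prop :=
  ∃ s : Finset R, ∀ x : R, ∃ c : R → R, x = ∑ y ∈ s, (c y) ^ p * y

/-- A prime ideal of height one: a nonzero prime admitting no prime strictly between it and
the zero ideal. -/
def IsHeightOnePrime {R : Type*} [CommRing R] (𝔭 : Ideal R) : Prop :=
  𝔭.IsPrime ∧ 𝔭 ≠ ⊥ ∧ ∀ q : Ideal R, q.IsPrime → q < 𝔭 → q = ⊥

/-- A ring of characteristic `p` is strongly F-regular if every nonzero element is sent
to `1` by some `p^e`-linear map. -/
def StronglyFRegular (p : ℕ) (R : Type*) [CommRing R] : Prop :=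
  ∀ c : R, c ≠ 0 → ∃ e : ℕ, 1 ≤ e ∧ ∃ φ : R →+ R, IsPLinearMap p e φ ∧ φ c = 1

/-!
Forward direction: `p^e`-linear maps localize, and compatibility with `𝔭` passes to `𝔭 R_q`.
Where `𝔭 ⊄ q`, pick `t ∈ 𝔭 \ q`. As `𝔭` has height one it is minimal over every nonzero `x ∈ 𝔭`,
so `t ^ n * s ∈ x R` for some `s ∉ 𝔭`; a map sending `s` to `1` then sends a multiple of `x` to `1`
in `R_q`, where `t` is a unit.

Backward direction: for F-finite `R` the module `F^e_* R` is finitely presented, so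
`Hom_R(F^e_* R, R)` commutes with localization and a local map descends, up to a unit, to a global
one. Hence for `c ∉ 𝔭` the ideal `I_e(c)` of values at `c` of `𝔭`-compatible `p^e`-linear maps
escapes each maximal ideal for some `e`. For `c = 1` this gives a compatible splitting of level
one, which makes `I_e(c)` increase with `e`; the chain stabilizes since `R` is noetherian, and its
limit, escaping every maximal ideal, is `R`.
-/

namespace IsPLinearMap

variable {p e f : ℕ} {R : Type*} [CommRing R] {φ ψ : R →+ R}

theorem zero : IsPLinearMap p e (0 : R →+ R) := fun _ _ => (mul_zero _).symm

theorem add (hφ : IsPLinearMap p e φ) (hψ : IsPLinearMap p e ψ) : IsPLinearMap p e (φ + ψ) :=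
  fun a b => by simp only [AddMonoidHom.add_apply, hφ a b, hψ a b, mul_add]

theorem mulLeft_comp (hφ : IsPLinearMap p e φ) (r : R) :
    IsPLinearMap p e ((AddMonoidHom.mulLeft r).comp φ) := fun a b => by
  simp only [AddMonoidHom.coe_comp, AddMonoidHom.coe_mulLeft, Function.comp_apply, hφ a b,
    mul_left_comm]

theorem comp_mulLeft (hφ : IsPLinearMap p e φ) (r : R) :
    IsPLinearMap p e (φ.comp (AddMonoidHom.mulLeft r)) := fun a b => by
  simp only [AddMonoidHom.coe_comp, AddMonoidHom.coe_mulLeft, Function.comp_apply]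
  rw [mul_left_comm, hφ]

theorem comp (hφ : IsPLinearMap p e φ) (hψ : IsPLinearMap p f ψ) :
    IsPLinearMap p (e + f) (φ.comp ψ) := fun a b => by
  simp only [AddMonoidHom.coe_comp, Function.comp_apply, pow_add, pow_mul, hψ _ b, hφ a]

theorem comp_iterateFrobenius [ExpChar R p] {k : ℕ} (hφ : IsPLinearMap p (e + k) φ) :
    IsPLinearMap p e (φ.comp (iterateFrobenius R p k).toAddMonoidHom) := fun a b => by
  have : (a ^ p ^ e * b) ^ p ^ k = a ^ p ^ (e + k) * b ^ p ^ k := by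
    rw [mul_pow, ← pow_mul, ← pow_add]
  change φ ((a ^ p ^ e * b) ^ p ^ k) = a * φ (b ^ p ^ k)
  rw [this, hφ]

end IsPLinearMap

theorem Ideal.eq_top_of_forall_isMaximal_not_le {R : Type*} [CommRing R] {I : Ideal R}
    (h : ∀ m : Ideal R, m.IsMaximal → ¬ I ≤ m) : I = ⊤ :=
  by_contra fun hI => let ⟨m, hm, hle⟩ := I.exists_le_maximal hI; h m hm hle

section SplittingIdeal

variable {p e : ℕ} {R : Type*} [CommRing R] {𝔮 : Ideal R} {c : R}

def splittingIdeal (p e : ℕ) (𝔮 : Ideal R) (c : R) : Ideal R where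
  carrier := {x | ∃ φ : R →+ R, IsPLinearMap p e φ ∧ (∀ y ∈ 𝔮, φ y ∈ 𝔮) ∧ φ c = x}
  add_mem' := by
    rintro _ _ ⟨φ, hφ, hφ𝔮, rfl⟩ ⟨ψ, hψ, hψ𝔮, rfl⟩
    exact ⟨φ + ψ, hφ.add hψ, fun y hy => 𝔮.add_mem (hφ𝔮 y hy) (hψ𝔮 y hy), rfl⟩
  zero_mem' := ⟨0, IsPLinearMap.zero, fun _ _ => 𝔮.zero_mem, rfl⟩
  smul_mem' := by
    rintro r _ ⟨φ, hφ, hφ𝔮, rfl⟩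
    exact ⟨_, hφ.mulLeft_comp r, fun y hy => 𝔮.mul_mem_left r (hφ𝔮 y hy), rfl⟩

theorem purelyFRegularAlong_iff_one_mem_splittingIdeal :
    PurelyFRegularAlong p 𝔮 ↔ ∀ c ∉ 𝔮, ∃ e, 1 ≤ e ∧ 1 ∈ splittingIdeal p e 𝔮 c :=
  Iff.rfl

variable [ExpChar R p]

theorem splittingIdeal_add_le (k : ℕ) :
    splittingIdeal p (e + k) 𝔮 (c ^ p ^ k) ≤ splittingIdeal p e 𝔮 c := by
  rintro _ ⟨φ, hφ, hφ𝔮, rfl⟩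
  exact ⟨_, hφ.comp_iterateFrobenius,
    fun y hy => hφ𝔮 _ (𝔮.pow_mem_of_mem hy _ (expChar_pow_pos R p k)), rfl⟩

/-- Precompose with `σ ∘ (c ^ (p - 1) * ·)`, which fixes `c` since `σ (c ^ p * 1) = c * σ 1`. -/
theorem splittingIdeal_le_succ (hσ : 1 ∈ splittingIdeal p 1 𝔮 1) :
    splittingIdeal p e 𝔮 c ≤ splittingIdeal p (e + 1) 𝔮 c := by
  obtain ⟨σ, hσ, hσ𝔮, hσ1⟩ := hσ
  rintro _ ⟨φ, hφ, hφ𝔮, rfl⟩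
  refine ⟨φ.comp (σ.comp (AddMonoidHom.mulLeft (c ^ (p - 1)))), hφ.comp (hσ.comp_mulLeft _),
    fun y hy => hφ𝔮 _ (hσ𝔮 _ (𝔮.mul_mem_left _ hy)), ?_⟩
  have hc : c ^ (p - 1) * c = c ^ p ^ 1 * 1 := by
    rw [pow_one, mul_one, ← pow_succ, Nat.sub_add_cancel (expChar_pos R p)]
  change φ (σ (c ^ (p - 1) * c)) = φ c
  rw [hc, hσ, hσ1, mul_one]

theorem one_mem_splittingIdeal_one_of_forall_isMaximal
    (h : ∀ m : Ideal R, m.IsMaximal → ∃ e, 1 ≤ e ∧ ¬ splittingIdeal p e 𝔮 1 ≤ m) :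
    1 ∈ splittingIdeal p 1 𝔮 1 := by
  refine (Ideal.eq_top_iff_one _).mp (Ideal.eq_top_of_forall_isMaximal_not_le fun m hm hle => ?_)
  obtain ⟨e, he, hem⟩ := h m hm
  obtain ⟨k, rfl⟩ := Nat.exists_eq_add_of_le he
  exact hem (le_trans (by simpa using splittingIdeal_add_le (𝔮 := 𝔮) (c := 1) k) hle)

theorem purelyFRegularAlong_of_forall_isMaximal [IsNoetherianRing R]
    (h : ∀ c ∉ 𝔮, ∀ m : Ideal R, m.IsMaximal → ∃ e, 1 ≤ e ∧ ¬ splittingIdeal p e 𝔮 c ≤ m) :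
    PurelyFRegularAlong p 𝔮 := by
  refine purelyFRegularAlong_iff_one_mem_splittingIdeal.mpr fun c hc => ?_
  have hσ : 1 ∈ splittingIdeal p 1 𝔮 1 :=
    one_mem_splittingIdeal_one_of_forall_isMaximal
      (h 1 fun h1 => hc (by simpa using 𝔮.mul_mem_left c h1))
  let J : ℕ →o Ideal R :=
    ⟨fun n => splittingIdeal p (n + 1) 𝔮 c,
      monotone_nat_of_le_succ fun _ => splittingIdeal_le_succ hσ⟩
  obtain ⟨N, hN⟩ := monotone_stabilizes_iff_noetherian.mpr inferInstance J
  have hJ : ∀ n, J n ≤ J N := fun n =>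
    (le_total n N).elim (J.monotone ·) fun hNn => (hN n hNn).ge
  refine ⟨N + 1, Nat.le_add_left 1 N, (Ideal.eq_top_iff_one _).mp ?_⟩
  refine Ideal.eq_top_of_forall_isMaximal_not_le fun m hm hle => ?_
  obtain ⟨e, he, hem⟩ := h c hc m hm
  obtain ⟨k, rfl⟩ := Nat.exists_eq_add_of_le' he
  exact hem ((hJ k).trans hle)

end SplittingIdeal

universe u

theorem FFinite.exists_fintype_span {p : ℕ} {R : Type u} [CommRing R] [ExpChar R p]
    (hff : FFinite p R) (e : ℕ) : ∃ (ι : Type u) (_ : Fintype ι) (v : ι → R),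
      ∀ x : R, ∃ c : ι → R, x = ∑ i, c i ^ p ^ e * v i := by
  obtain ⟨s, hs⟩ := hff
  induction e with
  | zero => exact ⟨PUnit, inferInstance, fun _ => 1, fun x => ⟨fun _ => x, by simp⟩⟩
  | succ e ih =>
    obtain ⟨ι, _, v, hv⟩ := ih
    refine ⟨ι × s, inferInstance, fun iz => (iz.2 : R) ^ p ^ e * v iz.1, fun x => ?_⟩
    obtain ⟨c, hc⟩ := hv x
    choose d hd using fun i => hs (c i)
    refine ⟨fun iz => d iz.1 iz.2, ?_⟩
    calc x = ∑ i, c i ^ p ^ e * v i := hc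
    _ = ∑ i, ∑ z ∈ s, d i z ^ p ^ (e + 1) * (z ^ p ^ e * v i) := by
        refine Finset.sum_congr rfl fun i _ => ?_
        rw [hd i, ← iterateFrobenius_def (R := R) (p := p) (n := e), map_sum, Finset.sum_mul]
        refine Finset.sum_congr rfl fun z _ => ?_
        rw [iterateFrobenius_def, mul_pow, ← pow_mul, ← pow_succ']
        ring
    _ = ∑ iz : ι × s, d iz.1 iz.2 ^ p ^ (e + 1) * ((iz.2 : R) ^ p ^ e * v iz.1) := by
        rw [Fintype.sum_prod_type]
        exact Finset.sum_congr rfl fun i _ => (Finset.sum_attach s _).symm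

/-- `F^e_* R`: the additive group of `R`, with `r` acting as multiplication by `r ^ p ^ e`. -/
def FrobeniusPushforward (_p _e : ℕ) (R : Type*) : Type _ := R

/-- `F^e_* A`; the phantom `R` carries the `R`-module structure through `algebraMap R A`. -/
def FrobeniusPushforwardAlg (_p _e : ℕ) (_R A : Type*) : Type _ := A

namespace FrobeniusPushforward

variable {p e : ℕ} {R : Type*} [CommRing R]

instance : AddCommGroup (FrobeniusPushforward p e R) := inferInstanceAs (AddCommGroup R)

variable [ExpChar R p]

instance : Module R (FrobeniusPushforward p e R) := Module.compHom R (iterateFrobenius R p e)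

def ofPLinear {φ : R →+ R} (hφ : IsPLinearMap p e φ) : FrobeniusPushforward p e R →ₗ[R] R where
  toFun x := φ x
  map_add' := φ.map_add
  map_smul' := hφ

def toPLinear (l : FrobeniusPushforward p e R →ₗ[R] R) : R →+ R where
  toFun x := l x
  map_zero' := l.map_zero
  map_add' := l.map_add

theorem isPLinearMap_toPLinear (l : FrobeniusPushforward p e R →ₗ[R] R) :
    IsPLinearMap p e (toPLinear l) :=
  l.map_smul

theorem finite (hff : FFinite p R) : Module.Finite R (FrobeniusPushforward p e R) := by
  obtain ⟨ι, _, v, hv⟩ := hff.exists_fintype_span e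
  let w : ι → FrobeniusPushforward p e R := v
  refine ⟨Submodule.fg_def.mpr ⟨Set.range w, Set.finite_range w, ?_⟩⟩
  rw [Submodule.eq_top_iff']
  intro x
  obtain ⟨c, hc⟩ := hv x
  exact (Submodule.mem_span_range_iff_exists_fun R).mpr ⟨c, hc.symm⟩

end FrobeniusPushforward

namespace FrobeniusPushforwardAlg

variable {p e : ℕ} {R A : Type*} [CommRing A]

instance : AddCommGroup (FrobeniusPushforwardAlg p e R A) := inferInstanceAs (AddCommGroup A)

variable [ExpChar A p]

instance : Module A (FrobeniusPushforwardAlg p e R A) :=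
  Module.compHom A (iterateFrobenius A p e)

def ofPLinear {ψ : A →+ A} (hψ : IsPLinearMap p e ψ) :
    FrobeniusPushforwardAlg p e R A →ₗ[A] A where
  toFun x := ψ x
  map_add' := ψ.map_add
  map_smul' := hψ

def toPLinear (L : FrobeniusPushforwardAlg p e R A →ₗ[A] A) : A →+ A where
  toFun x := L x
  map_zero' := L.map_zero
  map_add' := L.map_add

theorem isPLinearMap_toPLinear (L : FrobeniusPushforwardAlg p e R A →ₗ[A] A) :
    IsPLinearMap p e (toPLinear L) :=
  L.map_smul

variable [CommRing R] [Algebra R A]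

instance : Module R (FrobeniusPushforwardAlg p e R A) :=
  Module.compHom A ((iterateFrobenius A p e).comp (algebraMap R A))

instance : IsScalarTower R A (FrobeniusPushforwardAlg p e R A) :=
  IsScalarTower.of_algebraMap_smul fun _ _ => rfl

variable [ExpChar R p]

def localizationMap : FrobeniusPushforward p e R →ₗ[R] FrobeniusPushforwardAlg p e R A where
  toFun x := (algebraMap R A x : A)
  map_add' := map_add (algebraMap R A)
  map_smul' r x :=
    (map_mul (algebraMap R A) (r ^ p ^ e) x).trans (congrArg (· * algebraMap R A x) (map_pow _ _ _))

end FrobeniusPushforwardAlg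

section Localization

open FrobeniusPushforwardAlg

variable {p e : ℕ} {R A : Type*} [CommRing R] [CommRing A] [Algebra R A] [ExpChar R p]
  [ExpChar A p]

instance FrobeniusPushforwardAlg.isLocalizedModule_localizationMap (S : Submonoid R)
    [IsLocalization S A] :
    IsLocalizedModule S (localizationMap (p := p) (e := e) (R := R) (A := A)) where
  map_units s := by
    rw [Module.End.isUnit_iff]
    exact ((IsLocalization.map_units A s).pow (p ^ e)).unit.mulLeft_bijective
  surj y := by
    obtain ⟨⟨a, s⟩, h⟩ := IsLocalization.surj S (S := A) y
    refine ⟨((s : R) ^ (p ^ e - 1) * a, s), ?_⟩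
    change algebraMap R A s ^ p ^ e * @id A y = algebraMap R A ((s : R) ^ (p ^ e - 1) * a)
    rw [map_mul, map_pow, ← h, ← pow_sub_one_mul (expChar_pow_pos A p e).ne', mul_assoc]
    exact congrArg _ (mul_comm _ _)
  exists_of_eq {x₁ x₂} h := by
    obtain ⟨c, hc⟩ := IsLocalization.exists_of_eq (M := S) (S := A) h
    refine ⟨c, ?_⟩
    change (c : R) ^ p ^ e * @id R x₁ = (c : R) ^ p ^ e * @id R x₂
    rw [← pow_sub_one_mul (expChar_pow_pos R p e).ne', mul_assoc, mul_assoc]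
    exact congrArg _ hc

theorem FrobeniusPushforwardAlg.mapExtendScalars_localizationMap (S : Submonoid R)
    [IsLocalization S A] (l : FrobeniusPushforward p e R →ₗ[R] R) (x : R) :
    IsLocalizedModule.mapExtendScalars S (localizationMap (A := A)) (Algebra.linearMap R A) A l
      (localizationMap x) = algebraMap R A (l x) :=
  IsLocalizedModule.map_apply S _ _ l x

theorem IsPLinearMap.exists_localization (S : Submonoid R) [IsLocalization S A] {φ : R →+ R}
    (hφ : IsPLinearMap p e φ) :
    ∃ ψ : A →+ A, IsPLinearMap p e ψ ∧ ∀ x, ψ (algebraMap R A x) = algebraMap R A (φ x) :=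
  ⟨FrobeniusPushforwardAlg.toPLinear (IsLocalizedModule.mapExtendScalars S localizationMap
      (Algebra.linearMap R A) A (FrobeniusPushforward.ofPLinear hφ)),
    FrobeniusPushforwardAlg.isPLinearMap_toPLinear _, mapExtendScalars_localizationMap S _⟩

end Localization

section Descent

variable {p e : ℕ} {R A : Type*} [CommRing R] [CommRing A] [Algebra R A] [ExpChar A p]

theorem IsPLinearMap.map_mem_ideal_map (S : Submonoid R) [IsLocalization S A] {φ : R →+ R}
    {ψ : A →+ A} (hψ : IsPLinearMap p e ψ)
    (hψφ : ∀ x, ψ (algebraMap R A x) = algebraMap R A (φ x)) {𝔮 : Ideal R}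
    (hφ : ∀ y ∈ 𝔮, φ y ∈ 𝔮) {z : A} (hz : z ∈ 𝔮.map (algebraMap R A)) :
    ψ z ∈ 𝔮.map (algebraMap R A) := by
  obtain ⟨⟨⟨x, hx⟩, s⟩, hzs : z * algebraMap R A s = algebraMap R A x⟩ :=
    (IsLocalization.mem_map_algebraMap_iff S A).mp hz
  have hsz : algebraMap R A s ^ p ^ e * z = algebraMap R A (s ^ (p ^ e - 1) * x) := by
    rw [map_mul, map_pow, ← hzs, ← pow_sub_one_mul (expChar_pow_pos A p e).ne', mul_assoc,
      mul_comm z]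
  have hψz : algebraMap R A s * ψ z = algebraMap R A (φ (s ^ (p ^ e - 1) * x)) := by
    rw [← hψ, hsz, hψφ]
  rw [← Ideal.unit_mul_mem_iff_mem _ (IsLocalization.map_units A s), hψz]
  exact Ideal.mem_map_of_mem _ (hφ _ (𝔮.mul_mem_left _ hx))

variable [ExpChar R p]

theorem IsPLinearMap.exists_descent [IsNoetherianRing R] (hff : FFinite p R) (S : Submonoid R)
    [IsLocalization S A] {ψ : A →+ A} (hψ : IsPLinearMap p e ψ) :
    ∃ φ : R →+ R, ∃ s ∈ S, IsPLinearMap p e φ ∧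
      ∀ x, algebraMap R A (φ x) = algebraMap R A s * ψ (algebraMap R A x) := by
  have := FrobeniusPushforward.finite (e := e) hff
  have := Module.finitePresentation_of_finite R (FrobeniusPushforward p e R)
  obtain ⟨⟨l, s⟩, hl⟩ := IsLocalizedModule.surj S (IsLocalizedModule.mapExtendScalars S
    (FrobeniusPushforwardAlg.localizationMap (A := A)) (Algebra.linearMap R A) A)
    (FrobeniusPushforwardAlg.ofPLinear (R := R) hψ)
  refine ⟨FrobeniusPushforward.toPLinear l, s, s.2,
    FrobeniusPushforward.isPLinearMap_toPLinear l, fun x => ?_⟩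
  have hx := LinearMap.congr_fun hl (FrobeniusPushforwardAlg.localizationMap x)
  rw [FrobeniusPushforwardAlg.mapExtendScalars_localizationMap] at hx
  rw [← Algebra.smul_def, ← Submonoid.smul_def]
  exact hx.symm

theorem IsPLinearMap.exists_descent_of_apply_eq_one [IsNoetherianRing R] (hff : FFinite p R)
    (S : Submonoid R) [IsLocalization S A] {ψ : A →+ A} (hψ : IsPLinearMap p e ψ) {c : R}
    (hc : ψ (algebraMap R A c) = 1) :
    ∃ φ : R →+ R, ∃ s ∈ S, IsPLinearMap p e φ ∧
      (∀ x, algebraMap R A (φ x) = algebraMap R A s * ψ (algebraMap R A x)) ∧ φ c = s := by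
  obtain ⟨φ, s, hs, hφ, hφψ⟩ := hψ.exists_descent hff S
  obtain ⟨u, hu⟩ := IsLocalization.exists_of_eq (M := S) (S := A)
    (show algebraMap R A (φ c) = algebraMap R A s by rw [hφψ, hc, mul_one])
  refine ⟨(AddMonoidHom.mulLeft (u : R)).comp φ, u * s, S.mul_mem u.2 hs, hφ.mulLeft_comp _,
    fun x => ?_, hu⟩
  simp only [AddMonoidHom.coe_comp, AddMonoidHom.coe_mulLeft, Function.comp_apply, map_mul, hφψ,
    mul_assoc]

theorem PurelyFRegularAlong.map_localization {𝔮 : Ideal R} (h : PurelyFRegularAlong p 𝔮)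
    (S : Submonoid R) [IsLocalization S A] : PurelyFRegularAlong p (𝔮.map (algebraMap R A)) := by
  intro c hc
  obtain ⟨⟨x, s⟩, hxs⟩ := IsLocalization.surj S c
  have hx : x ∉ 𝔮 := fun hx => hc <|
    (Ideal.mul_unit_mem_iff_mem _ (IsLocalization.map_units A s)).mp
      (hxs ▸ Ideal.mem_map_of_mem _ hx)
  obtain ⟨e, he, φ, hφ, hφ𝔮, hφx⟩ := h x hx
  obtain ⟨ψ, hψ, hψφ⟩ := hφ.exists_localization (A := A) S
  refine ⟨e, he, ψ.comp (AddMonoidHom.mulLeft (algebraMap R A s)), hψ.comp_mulLeft _,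
    fun z hz => hψ.map_mem_ideal_map S hψφ hφ𝔮 (Ideal.mul_mem_left _ _ hz), ?_⟩
  change ψ (algebraMap R A s * c) = 1
  rw [mul_comm, hxs, hψφ, hφx, map_one]

theorem exists_mem_splittingIdeal_of_purelyFRegularAlong_map [IsNoetherianRing R]
    (hff : FFinite p R) {𝔭 : Ideal R} (h𝔭 : 𝔭.IsPrime) (S : Submonoid R) [IsLocalization S A]
    (hS : Disjoint (S : Set R) 𝔭) (h : PurelyFRegularAlong p (𝔭.map (algebraMap R A)))
    {c : R} (hc : c ∉ 𝔭) : ∃ e, 1 ≤ e ∧ ∃ s ∈ S, s ∈ splittingIdeal p e 𝔭 c := by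
  have h𝔭A := IsLocalization.under_map_of_isPrime_disjoint S A h𝔭 hS
  obtain ⟨e, he, ψ, hψ, hψ𝔭, hψc⟩ :=
    h (algebraMap R A c) fun hc' => hc (h𝔭A ▸ Ideal.mem_comap.mpr hc')
  obtain ⟨φ, s, hs, hφ, hφψ, hφc⟩ := hψ.exists_descent_of_apply_eq_one hff S hψc
  refine ⟨e, he, s, hs, φ, hφ, fun y hy => ?_, hφc⟩
  rw [← h𝔭A, Ideal.mem_comap, hφψ]
  exact Ideal.mul_mem_left _ _ (hψ𝔭 _ (Ideal.mem_map_of_mem _ hy))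

theorem exists_mem_splittingIdeal_of_stronglyFRegular [IsNoetherianRing R] (hff : FFinite p R)
    {𝔭 : Ideal R} (S : Submonoid R) [IsLocalization S A] (hS : S ≤ nonZeroDivisors R)
    (h : StronglyFRegular p A) {t : R} (ht𝔭 : t ∈ 𝔭) (htS : t ∈ S) {c : R} (hc : c ≠ 0) :
    ∃ e, 1 ≤ e ∧ ∃ s ∈ S, s ∈ splittingIdeal p e 𝔭 c := by
  obtain ⟨e, he, ψ, hψ, hψc⟩ :=
    h (algebraMap R A c) ((map_ne_zero_iff _ (IsLocalization.injective A hS)).mpr hc)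
  obtain ⟨φ, s, hs, hφ, -, hφc⟩ := hψ.exists_descent_of_apply_eq_one hff S hψc
  exact ⟨e, he, t * s, S.mul_mem htS hs, (AddMonoidHom.mulLeft t).comp φ, hφ.mulLeft_comp t,
    fun _ _ => 𝔭.mul_mem_right _ ht𝔭, congrArg (t * ·) hφc⟩

end Descent

section HeightOne

variable {R : Type*} [CommRing R] [IsDomain R] {𝔭 : Ideal R}

/-- Every prime of `R_𝔭` containing `x ≠ 0` is the maximal ideal, since it contracts to a nonzero
prime inside `𝔭`; so `t ∈ 𝔭` lies in the radical of `x R_𝔭`. -/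
theorem IsHeightOnePrime.exists_pow_mul_eq_mul (h𝔭 : IsHeightOnePrime 𝔭) {t x : R}
    (ht : t ∈ 𝔭) (hx : x ≠ 0) : ∃ (n : ℕ) (a s : R), s ∉ 𝔭 ∧ t ^ n * s = x * a := by
  have := h𝔭.1
  let Rₚ := Localization.AtPrime 𝔭
  have hinj := IsLocalization.injective Rₚ 𝔭.primeCompl_le_nonZeroDivisors
  have hrad : algebraMap R Rₚ t ∈ (Ideal.span {algebraMap R Rₚ x}).radical := by
    rw [Ideal.radical_eq_sInf, Ideal.mem_sInf]
    rintro P ⟨hxP, hP⟩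
    have hle : P.under R ≤ 𝔭 :=
      (Ideal.comap_mono (IsLocalRing.le_maximalIdeal hP.ne_top)).trans_eq
        Localization.AtPrime.under_maximalIdeal
    have hne : P.under R ≠ ⊥ := fun h0 =>
      hx (by simpa [h0] using Ideal.mem_comap.mpr (hxP (Ideal.mem_span_singleton_self _)))
    have heq : P.under R = 𝔭 := hle.eq_of_not_lt fun hlt => hne (h𝔭.2.2 _ (hP.comap _) hlt)
    rw [← IsLocalization.map_under 𝔭.primeCompl Rₚ P, heq]
    exact Ideal.mem_map_of_mem _ ht
  obtain ⟨n, hn⟩ := hrad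
  obtain ⟨y, hy⟩ := Ideal.mem_span_singleton'.mp hn
  obtain ⟨⟨a, s⟩, has⟩ := IsLocalization.surj 𝔭.primeCompl y
  refine ⟨n, a, s, s.2, hinj ?_⟩
  rw [map_mul, map_pow, map_mul, ← hy, ← has]
  ring

end HeightOne

theorem PurelyFRegularAlong.stronglyFRegular_localization {p : ℕ} {R A : Type*} [CommRing R]
    [IsDomain R] [CommRing A] [Algebra R A] [ExpChar R p] [ExpChar A p] {𝔭 : Ideal R}
    (h : PurelyFRegularAlong p 𝔭) (h𝔭 : IsHeightOnePrime 𝔭) (S : Submonoid R)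
    [IsLocalization S A] {t : R} (ht𝔭 : t ∈ 𝔭) (htS : t ∈ S) : StronglyFRegular p A := by
  intro c hc
  obtain ⟨⟨x, s₀⟩, hxs⟩ := IsLocalization.surj S c
  have hx : x ≠ 0 := by
    rintro rfl
    exact hc ((IsLocalization.map_units A s₀).mul_left_eq_zero.mp (hxs.trans (map_zero _)))
  obtain ⟨n, a, s, hs, hts⟩ := h𝔭.exists_pow_mul_eq_mul ht𝔭 hx
  obtain ⟨e, he, φ, hφ, -, hφs⟩ := h s hs
  obtain ⟨ψ, hψ, hψφ⟩ := hφ.exists_localization (A := A) S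
  let T : S := ⟨t ^ n, pow_mem htS n⟩
  have hc : IsLocalization.mk' A (s₀ * a) T * c = algebraMap R A s := by
    refine (IsLocalization.map_units A T).mul_left_inj.mp ?_
    calc IsLocalization.mk' A (s₀ * a) T * c * algebraMap R A T
        = algebraMap R A (s₀ * a) * c := by rw [mul_right_comm, IsLocalization.mk'_spec]
      _ = algebraMap R A (t ^ n * s) := by rw [hts, map_mul, map_mul, ← hxs]; ring
      _ = algebraMap R A s * algebraMap R A T := by rw [map_mul, mul_comm]
  refine ⟨e, he, ψ.comp (AddMonoidHom.mulLeft (IsLocalization.mk' A (s₀ * a) T)),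
    hψ.comp_mulLeft _, ?_⟩
  change ψ (IsLocalization.mk' A (s₀ * a) T * c) = 1
  rw [hc, hψφ, hφs, map_one]

instance {p : ℕ} {R : Type*} [CommRing R] [IsDomain R] [ExpChar R p] (q : Ideal R) [q.IsPrime] :
    ExpChar (Localization.AtPrime q) p :=
  expChar_of_injective_algebraMap (IsLocalization.injective _ q.primeCompl_le_nonZeroDivisors) p

theorem purelyFRegular_iff_local_general (p : ℕ) (hp : p.Prime)
    (R : Type*) [CommRing R] [IsDomain R] [IsNoetherianRing R]
    [CharP R p] (hff : FFinite p R)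
    (𝔭 : Ideal R) (h𝔭 : IsHeightOnePrime 𝔭) :
    PurelyFRegularAlong p 𝔭 ↔
      ((∀ (q : Ideal R) [q.IsPrime], 𝔭 ≤ q →
        PurelyFRegularAlong p (𝔭.map (algebraMap R (Localization.AtPrime q)))) ∧
      (∀ (q : Ideal R) [q.IsPrime], ¬ 𝔭 ≤ q →
        StronglyFRegular p (Localization.AtPrime q))) := by
  have : Fact p.Prime := ⟨hp⟩
  refine ⟨fun h => ⟨fun q _ _ => h.map_localization q.primeCompl, fun q _ h𝔭q => ?_⟩,
    fun ⟨hle, hnle⟩ => purelyFRegularAlong_of_forall_isMaximal fun c hc m hm => ?_⟩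
  · obtain ⟨t, ht𝔭, htq⟩ := SetLike.not_le_iff_exists.mp h𝔭q
    exact h.stronglyFRegular_localization h𝔭 q.primeCompl ht𝔭 htq
  · have := hm.isPrime
    suffices ∃ e, 1 ≤ e ∧ ∃ s ∈ m.primeCompl, s ∈ splittingIdeal p e 𝔭 c by
      obtain ⟨e, he, s, hs, hsc⟩ := this
      exact ⟨e, he, fun hle => hs (hle hsc)⟩
    by_cases h𝔭m : 𝔭 ≤ m
    · exact exists_mem_splittingIdeal_of_purelyFRegularAlong_map hff h𝔭.1 m.primeCompl
        (Set.disjoint_left.mpr fun _ hs h𝔭s => hs (h𝔭m h𝔭s)) (hle m h𝔭m) hc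
    · obtain ⟨t, ht𝔭, htm⟩ := SetLike.not_le_iff_exists.mp h𝔭m
      exact exists_mem_splittingIdeal_of_stronglyFRegular hff m.primeCompl
        m.primeCompl_le_nonZeroDivisors (hnle m h𝔭m) ht𝔭 htm fun h0 => hc (h0 ▸ 𝔭.zero_mem)

/-- Pure F-regularity along a height-one prime is a local condition: it holds iff the pair is
purely F-regular at all primes containing `𝔭` and the ring is strongly F-regular at all other
primes. -/
theorem purelyFRegular_iff_local (p : ℕ) (hp : p.Prime)
    (R : Type*) [CommRing R] [IsDomain R] [IsNoetherianRing R] [IsIntegrallyClosed R]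
    [CharP R p] (hff : FFinite p R)
    (𝔭 : Ideal R) (h𝔭 : IsHeightOnePrime 𝔭) :
    PurelyFRegularAlong p 𝔭 ↔
      ((∀ (q : Ideal R) [q.IsPrime], 𝔭 ≤ q →
        PurelyFRegularAlong p (𝔭.map (algebraMap R (Localization.AtPrime q)))) ∧
      (∀ (q : Ideal R) [q.IsPrime], ¬ 𝔭 ≤ q →
        StronglyFRegular p (Localization.AtPrime q))) :=
  purelyFRegular_iff_local_general p hp R hff 𝔭 h𝔭
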